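/- Let u : ℝ × ℝ → ℝ, u = u(t,x), be a C³ solution of the dissipative Camassa–Holm-type equation. Assume that for every t ≥ 0: the functions x ↦ u(t,x) and x ↦ ∂_t u(t,x) are integrable on ℝ; the flux Φ(t,x) := (3/2)u² - u_{tx} - u u_{xx} - (1/2)u_x² - α u - (β/3)u³ - (γ/4)u⁴ - Γ u_{xx} - λ u_x tends to 0 as x → ±∞ and x ↦ ∂_x Φ(t,x) is integrable; and the function t ↦ ∫_ℝ u(t,x) dx is differentiable with derivative ∫_ℝ ∂_t u(t,x) dx. Then for all t ≥ 0: ∫_ℝ u(t,x) dx = e^{-λ t} ∫_ℝ u(0,x) dx. -/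

import Mathlib

open MeasureTheory Filter

/-- Partial derivative with respect to the first (time) variable of a curried
function `u : ℝ → ℝ → ℝ`, `u = u t x`. -/
noncomputable def pt (u : ℝ → ℝ → ℝ) : ℝ → ℝ → ℝ := fun t x => deriv (fun s => u s x) t

/-- Partial derivative with respect to the second (space) variable of a curried
function `u : ℝ → ℝ → ℝ`, `u = u t x`. -/
noncomputable def px (u : ℝ → ℝ → ℝ) : ℝ → ℝ → ℝ := fun t x => deriv (fun y => u t y) x

/-- The flux `Φ` of the first conservation law of the dissipative
Camassa–Holm-type equation. -/
noncomputable def Phi (lam α β γ Γ : ℝ) (u : ℝ → ℝ → ℝ) : ℝ → ℝ → ℝ := fun t x =>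
  (3 / 2) * (u t x) ^ 2 - px (pt u) t x - u t x * px (px u) t x
    - (1 / 2) * (px u t x) ^ 2 - α * u t x - (β / 3) * (u t x) ^ 3
    - (γ / 4) * (u t x) ^ 4 - Γ * px (px u) t x - lam * px u t x

/-!
The equation is the conservation law `u_t + λ u + ∂ₓΦ = 0`. Integrating in `x` and using
that `Φ` vanishes at `±∞`, the mean `I(t) = ∫ u(t, x) dx` solves `I' = -λ I`, so
`e^{λ t} I(t)` is constant on `[0, ∞)`.
-/

open Function

section PartialDerivatives

variable {u : ℝ → ℝ → ℝ} {t x : ℝ} {m n : WithTop ℕ∞}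

lemma hasDerivAt_fderiv_apply_zero_one (h : DifferentiableAt ℝ (uncurry u) (t, x)) :
    HasDerivAt (u t) (fderiv ℝ (uncurry u) (t, x) (0, 1)) x :=
  h.hasFDerivAt.comp_hasDerivAt x ((hasDerivAt_const x t).prodMk (hasDerivAt_id' x))

lemma hasDerivAt_fderiv_apply_one_zero (h : DifferentiableAt ℝ (uncurry u) (t, x)) :
    HasDerivAt (u · x) (fderiv ℝ (uncurry u) (t, x) (1, 0)) t :=
  (h.hasFDerivAt.comp_hasDerivAt t ((hasDerivAt_id' t).prodMk (hasDerivAt_const t x)) :)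

lemma hasDerivAt_px (h : DifferentiableAt ℝ (uncurry u) (t, x)) :
    HasDerivAt (u t) (px u t x) x :=
  (hasDerivAt_fderiv_apply_zero_one h).differentiableAt.hasDerivAt

lemma ContDiff.uncurry_px (h : ContDiff ℝ n (uncurry u)) (hmn : m + 1 ≤ n) :
    ContDiff ℝ m (uncurry (px u)) := by
  have hd : Differentiable ℝ (uncurry u) := (h.of_le (le_add_self.trans hmn)).differentiable_one
  have : uncurry (px u) = fun p => fderiv ℝ (uncurry u) p (0, 1) :=
    funext fun ⟨t, x⟩ => (hasDerivAt_fderiv_apply_zero_one (hd (t, x))).deriv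
  rw [this]
  exact (h.fderiv_right hmn).clm_apply contDiff_const

lemma ContDiff.uncurry_pt (h : ContDiff ℝ n (uncurry u)) (hmn : m + 1 ≤ n) :
    ContDiff ℝ m (uncurry (pt u)) := by
  have hd : Differentiable ℝ (uncurry u) := (h.of_le (le_add_self.trans hmn)).differentiable_one
  have : uncurry (pt u) = fun p => fderiv ℝ (uncurry u) p (1, 0) :=
    funext fun ⟨t, x⟩ => (hasDerivAt_fderiv_apply_one_zero (hd (t, x))).deriv
  rw [this]
  exact (h.fderiv_right hmn).clm_apply contDiff_const

end PartialDerivatives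

def SolvesDissipativeCH (lam α β γ Γ : ℝ) (u : ℝ → ℝ → ℝ) : Prop :=
  ∀ t x : ℝ,
    pt u t x - px (px (pt u)) t x + 3 * u t x * px u t x + lam * (u t x - px (px u) t x)
      = 2 * px u t x * px (px u) t x + u t x * px (px (px u)) t x
        + α * px u t x + β * (u t x) ^ 2 * px u t x + γ * (u t x) ^ 3 * px u t x
        + Γ * px (px (px u)) t x

section ConservationLaw

variable {lam α β γ Γ : ℝ} {u : ℝ → ℝ → ℝ}

lemma hasDerivAt_Phi_of_solves (hu : ContDiff ℝ 3 (uncurry u))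
    (heq : SolvesDissipativeCH lam α β γ Γ u) (t x : ℝ) :
    HasDerivAt (Phi lam α β γ Γ u t) (-(pt u t x + lam * u t x)) x := by
  have hux : ContDiff ℝ 2 (uncurry (px u)) := hu.uncurry_px (by norm_num)
  have huxx : ContDiff ℝ 1 (uncurry (px (px u))) := hux.uncurry_px (by norm_num)
  have hutx : ContDiff ℝ 1 (uncurry (px (pt u))) :=
    (hu.uncurry_pt (m := 2) (by norm_num)).uncurry_px (by norm_num)
  have du := hasDerivAt_px (t := t) (x := x) (hu.differentiable (by norm_num) _)
  have dux := hasDerivAt_px (t := t) (x := x) (hux.differentiable (by norm_num) _)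
  have duxx := hasDerivAt_px (t := t) (x := x) (huxx.differentiable (by norm_num) _)
  have dutx := hasDerivAt_px (t := t) (x := x) (hutx.differentiable (by norm_num) _)
  have H := (((((((((du.pow 2).const_mul (3 / 2 : ℝ)).sub dutx).sub (du.mul duxx)).sub
    ((dux.pow 2).const_mul (1 / 2 : ℝ))).sub (du.const_mul α)).sub
    ((du.pow 3).const_mul (β / 3))).sub ((du.pow 4).const_mul (γ / 4))).sub
    (duxx.const_mul Γ)).sub (dux.const_mul lam)
  refine H.congr_deriv ?_
  linear_combination heq t x

lemma integral_pt_eq_neg_mul_integral (hu : ContDiff ℝ 3 (uncurry u))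
    (heq : SolvesDissipativeCH lam α β γ Γ u) {t : ℝ} (hint : Integrable (u t))
    (hfluxTop : Tendsto (Phi lam α β γ Γ u t) atTop (nhds 0))
    (hfluxBot : Tendsto (Phi lam α β γ Γ u t) atBot (nhds 0))
    (hfluxInt : Integrable (deriv (Phi lam α β γ Γ u t))) :
    ∫ x, pt u t x = -lam * ∫ x, u t x := by
  have hderivPhi (x : ℝ) : deriv (Phi lam α β γ Γ u t) x = -(pt u t x + lam * u t x) :=
    (hasDerivAt_Phi_of_solves hu heq t x).deriv
  have hpt : (pt u t) = fun x => -lam * u t x - deriv (Phi lam α β γ Γ u t) x := by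
    ext x
    rw [hderivPhi]
    ring
  have hfluxZero : ∫ x, deriv (Phi lam α β γ Γ u t) x = 0 := by
    simpa using integral_of_hasDerivAt_of_tendsto
      (fun x => (hasDerivAt_Phi_of_solves hu heq t x).differentiableAt.hasDerivAt)
      hfluxInt hfluxBot hfluxTop
  rw [hpt, integral_sub (hint.const_mul (-lam)) hfluxInt, integral_const_mul, hfluxZero,
    sub_zero]

end ConservationLaw

lemma eq_exp_mul_of_hasDerivAt_mul_self {I : ℝ → ℝ} {c : ℝ}
    (hI : ∀ s, 0 ≤ s → HasDerivAt I (c * I s) s) {t : ℝ} (ht : 0 ≤ t) :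
    I t = Real.exp (c * t) * I 0 := by
  set g : ℝ → ℝ := fun s => Real.exp (-c * s) * I s
  have hg (s : ℝ) (hs : 0 ≤ s) : HasDerivAt g 0 s := by
    have he : HasDerivAt (fun r => Real.exp (-c * r)) (Real.exp (-c * s) * -c) s := by
      simpa using ((hasDerivAt_id s).const_mul (-c)).exp
    exact (he.mul (hI s hs)).congr_deriv (by ring)
  have hconst : g t = g 0 :=
    constant_of_has_deriv_right_zero
      (fun s hs => (hg s hs.1).continuousAt.continuousWithinAt)
      (fun s hs => (hg s hs.1).hasDerivWithinAt) t ⟨ht, le_rfl⟩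
  calc I t = Real.exp (c * t) * g t := by
        simp only [g, ← mul_assoc, ← Real.exp_add]
        simp
    _ = Real.exp (c * t) * I 0 := by rw [hconst]; simp [g]

theorem stmt_3_general (lam α β γ Γ : ℝ) (u : ℝ → ℝ → ℝ)
    (hu : ContDiff ℝ 3 (Function.uncurry u))
    (heq : ∀ t x : ℝ,
      pt u t x - px (px (pt u)) t x + 3 * u t x * px u t x
          + lam * (u t x - px (px u) t x)
        = 2 * px u t x * px (px u) t x + u t x * px (px (px u)) t x
          + α * px u t x + β * (u t x) ^ 2 * px u t x + γ * (u t x) ^ 3 * px u t x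
          + Γ * px (px (px u)) t x)
    (hint : ∀ t : ℝ, 0 ≤ t → Integrable (fun x => u t x))
    (hfluxTop : ∀ t : ℝ, 0 ≤ t → Tendsto (fun x => Phi lam α β γ Γ u t x) atTop (nhds 0))
    (hfluxBot : ∀ t : ℝ, 0 ≤ t → Tendsto (fun x => Phi lam α β γ Γ u t x) atBot (nhds 0))
    (hfluxInt : ∀ t : ℝ, 0 ≤ t →
      Integrable (fun x => deriv (fun y => Phi lam α β γ Γ u t y) x))
    (hdiff : ∀ t : ℝ, 0 ≤ t →
      HasDerivAt (fun s => ∫ x : ℝ, u s x) (∫ x : ℝ, pt u t x) t) :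
    ∀ t : ℝ, 0 ≤ t → (∫ x : ℝ, u t x) = Real.exp (-lam * t) * ∫ x : ℝ, u 0 x := by
  intro t ht
  refine eq_exp_mul_of_hasDerivAt_mul_self (I := fun s => ∫ x, u s x) (fun s hs => ?_) ht
  rw [← integral_pt_eq_neg_mul_integral hu heq (hint s hs) (hfluxTop s hs) (hfluxBot s hs)
    (hfluxInt s hs)]
  exact hdiff s hs

/-- decay of the mean, `∫ u(t) = e^{-λt} ∫ u(0)`. -/
theorem stmt_3 (lam α β γ Γ : ℝ) (u : ℝ → ℝ → ℝ)
    (hu : ContDiff ℝ 3 (Function.uncurry u))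
    (heq : ∀ t x : ℝ,
      pt u t x - px (px (pt u)) t x + 3 * u t x * px u t x
          + lam * (u t x - px (px u) t x)
        = 2 * px u t x * px (px u) t x + u t x * px (px (px u)) t x
          + α * px u t x + β * (u t x) ^ 2 * px u t x + γ * (u t x) ^ 3 * px u t x
          + Γ * px (px (px u)) t x)
    (hint : ∀ t : ℝ, 0 ≤ t → Integrable (fun x => u t x))
    (hintt : ∀ t : ℝ, 0 ≤ t → Integrable (fun x => pt u t x))
    (hfluxTop : ∀ t : ℝ, 0 ≤ t → Tendsto (fun x => Phi lam α β γ Γ u t x) atTop (nhds 0))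
    (hfluxBot : ∀ t : ℝ, 0 ≤ t → Tendsto (fun x => Phi lam α β γ Γ u t x) atBot (nhds 0))
    (hfluxInt : ∀ t : ℝ, 0 ≤ t →
      Integrable (fun x => deriv (fun y => Phi lam α β γ Γ u t y) x))
    (hdiff : ∀ t : ℝ, 0 ≤ t →
      HasDerivAt (fun s => ∫ x : ℝ, u s x) (∫ x : ℝ, pt u t x) t) :
    ∀ t : ℝ, 0 ≤ t → (∫ x : ℝ, u t x) = Real.exp (-lam * t) * ∫ x : ℝ, u 0 x :=
  stmt_3_general lam α β γ Γ u hu heq hint hfluxTop hfluxBot hfluxInt hdiff
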